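/- arXiv:2501.04898 — 2 statements merged into one kernel-verified Lean document; each statement's English description precedes it below -/
import Mathlib

section
/- Let r ≥ 0 be an integer, let σ(x) = 1/(1+e^{-x}) be the sigmoid function, and for B > 0 let δ_B(x) = σ(Bx) − σ(B(x−1)). There exists a constant C > 0 depending only on r such that for every B ≥ 1 and every integer 0 ≤ j ≤ r, sup_{x ∈ [0,1]} | (d^j/dx^j)[ δ_B(x+1) + δ_B(x) + δ_B(x−1) − 1 ] | ≤ C · B^r · e^{−B}. -/
/-! The sum of the three translates telescopes to `σ(B(x+1)) − σ(B(x−2))`, and by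
`σ(u) − 1 = −σ(−u)` its distance to `1` is `−σ(−B(x+1)) − σ(B(x−2))`. Both arguments are at
most `−B` on `[0,1]`. Every derivative of `σ` is a polynomial in `σ` without constant term,
so `|σ^{(j)}(t)| ≤ M_j σ(t) ≤ M_j e^t`, and the chain rule contributes the factor `B^j`. -/

open Real MeasureTheory

/-- The sigmoid function `σ(x) = 1/(1+e^{-x})`. -/
noncomputable def sigmoid (x : ℝ) : ℝ := 1 / (1 + Real.exp (-x))

/-- `δ_B(x) = σ(Bx) - σ(B(x-1))`, a smooth approximation of the indicator of `[0,1)`. -/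
noncomputable def deltaB (B x : ℝ) : ℝ := _root_.sigmoid (B * x) - _root_.sigmoid (B * (x - 1))

open Polynomial

theorem Polynomial.exists_abs_eval_le_mul_of_X_dvd {p : ℝ[X]} (hp : X ∣ p) :
    ∃ M, ∀ s ∈ Set.Icc (0 : ℝ) 1, |p.eval s| ≤ M * s := by
  obtain ⟨q, rfl⟩ := hp
  obtain ⟨M, hM⟩ := isCompact_Icc.exists_bound_of_continuousOn q.continuous.continuousOn
  refine ⟨M, fun s hs => ?_⟩
  rw [eval_mul, eval_X, abs_mul, abs_of_nonneg hs.1, mul_comm]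
  exact mul_le_mul_of_nonneg_right (hM s hs) hs.1

theorem iteratedDeriv_comp_const_mul_add_const {𝕜 : Type*} [NontriviallyNormedField 𝕜]
    {f : 𝕜 → 𝕜} {n : ℕ} (hf : ContDiff 𝕜 n f) (a b x : 𝕜) :
    iteratedDeriv n (fun y => f (a * (y + b))) x = a ^ n * iteratedDeriv n f (a * (x + b)) := by
  rw [iteratedDeriv_comp_add_const n (fun z => f (a * z)),
    iteratedDeriv_comp_const_mul hf]

namespace Real

theorem sigmoid_le_exp (t : ℝ) : sigmoid t ≤ exp t := by
  have h := sigmoid_mul_rexp_neg (-t)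
  rw [neg_neg] at h
  rw [← h]
  exact mul_le_of_le_one_left (exp_pos t).le (sigmoid_le_one _)

theorem exists_iteratedDeriv_sigmoid_eq_eval (n : ℕ) :
    ∃ p : ℝ[X], X ∣ p ∧ ∀ t, iteratedDeriv n sigmoid t = p.eval (sigmoid t) := by
  induction n with
  | zero => exact ⟨X, dvd_rfl, fun t => by simp⟩
  | succ n ih =>
    obtain ⟨p, -, hp⟩ := ih
    refine ⟨derivative p * (X - X ^ 2), dvd_mul_of_dvd_right ⟨1 - X, by ring⟩ _, fun t => ?_⟩
    have hd : HasDerivAt (fun s => p.eval (sigmoid s))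
        (p.derivative.eval (sigmoid t) * (sigmoid t * (1 - sigmoid t))) t :=
      (p.hasDerivAt (sigmoid t)).comp t (hasDerivAt_sigmoid t)
    rw [iteratedDeriv_succ, funext hp, hd.deriv]
    simp only [eval_mul, eval_sub, eval_X, eval_pow]
    ring

theorem exists_abs_iteratedDeriv_sigmoid_le_mul_exp (n : ℕ) :
    ∃ M, ∀ t, |iteratedDeriv n sigmoid t| ≤ M * exp t := by
  obtain ⟨p, hX, hp⟩ := exists_iteratedDeriv_sigmoid_eq_eval n
  obtain ⟨M, hM⟩ := exists_abs_eval_le_mul_of_X_dvd hX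
  have hM0 : 0 ≤ M := by simpa using (abs_nonneg _).trans (hM 1 ⟨zero_le_one, le_rfl⟩)
  refine ⟨M, fun t => ?_⟩
  rw [hp]
  calc |p.eval (sigmoid t)| ≤ M * sigmoid t :=
        hM _ ⟨sigmoid_nonneg t, sigmoid_le_one t⟩
    _ ≤ M * exp t := mul_le_mul_of_nonneg_left (sigmoid_le_exp t) hM0

theorem exists_pos_abs_iteratedDeriv_sigmoid_le_mul_exp (r : ℕ) :
    ∃ M > 0, ∀ j ≤ r, ∀ t, |iteratedDeriv j sigmoid t| ≤ M * exp t := by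
  choose g hg using exists_abs_iteratedDeriv_sigmoid_le_mul_exp
  refine ⟨1 + ∑ i ∈ Finset.range (r + 1), |g i|, by positivity, fun j hj t => (hg j t).trans ?_⟩
  gcongr
  calc g j ≤ |g j| := le_abs_self _
    _ ≤ ∑ i ∈ Finset.range (r + 1), |g i| :=
        Finset.single_le_sum (fun i _ => abs_nonneg (g i)) (Finset.mem_range.2 (by omega))
    _ ≤ _ := le_add_of_nonneg_left zero_le_one

end Real

theorem sigmoid_eq_real_sigmoid : _root_.sigmoid = Real.sigmoid :=
  funext fun _ => one_div _

theorem deltaB_add_deltaB_add_deltaB (B y : ℝ) :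
    deltaB B (y + 1) + deltaB B y + deltaB B (y - 1) =
      Real.sigmoid (B * (y + 1)) - Real.sigmoid (B * (y - 2)) := by
  simp only [deltaB, sigmoid_eq_real_sigmoid]
  ring_nf

theorem deltaB_add_deltaB_add_deltaB_sub_one (B y : ℝ) :
    deltaB B (y + 1) + deltaB B y + deltaB B (y - 1) - 1 =
      -(Real.sigmoid (-B * (y + 1)) + Real.sigmoid (B * (y + -2))) := by
  rw [deltaB_add_deltaB_add_deltaB, neg_mul, Real.sigmoid_neg, ← sub_eq_add_neg]
  ring

theorem iteratedDeriv_deltaB_add_deltaB_add_deltaB_sub_one (B : ℝ) (j : ℕ) (x : ℝ) :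
    iteratedDeriv j (fun y => deltaB B (y + 1) + deltaB B y + deltaB B (y - 1) - 1) x =
      -((-B) ^ j * iteratedDeriv j Real.sigmoid (-B * (x + 1)) +
        B ^ j * iteratedDeriv j Real.sigmoid (B * (x + -2))) := by
  have hsmooth (a b : ℝ) : ContDiff ℝ j fun y => Real.sigmoid (a * (y + b)) :=
    (contDiff_sigmoid.of_le le_top).comp (contDiff_const.mul (contDiff_id.add contDiff_const))
  simp only [deltaB_add_deltaB_add_deltaB_sub_one, iteratedDeriv_fun_neg]
  rw [iteratedDeriv_fun_add (hsmooth _ _).contDiffAt (hsmooth _ _).contDiffAt,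
    iteratedDeriv_comp_const_mul_add_const (contDiff_sigmoid.of_le le_top),
    iteratedDeriv_comp_const_mul_add_const (contDiff_sigmoid.of_le le_top)]

theorem abs_pow_mul_iteratedDeriv_sigmoid_le {M B c t : ℝ} {j r : ℕ}
    (hM : ∀ t, |iteratedDeriv j Real.sigmoid t| ≤ M * exp t) (hB : 1 ≤ B) (hc : |c| = B)
    (hj : j ≤ r) (ht : t ≤ -B) :
    |c ^ j * iteratedDeriv j Real.sigmoid t| ≤ M * B ^ r * exp (-B) := by
  have hM0 : 0 ≤ M := by simpa using (abs_nonneg _).trans (hM 0)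
  rw [abs_mul, abs_pow, hc]
  calc B ^ j * |iteratedDeriv j Real.sigmoid t| ≤ B ^ r * (M * exp (-B)) := by
        gcongr
        exact (hM t).trans (by gcongr)
    _ = M * B ^ r * exp (-B) := by ring

/-- smooth decay of the sum of three neighboring translates of `δ_B` towards
the constant function `1` on `[0,1]`, with all derivatives up to order `r`. -/
theorem stmt0 (r : ℕ) :
    ∃ C > (0:ℝ), ∀ B : ℝ, 1 ≤ B → ∀ j : ℕ, j ≤ r → ∀ x ∈ Set.Icc (0:ℝ) 1,
      |iteratedDeriv j (fun y => deltaB B (y + 1) + deltaB B y + deltaB B (y - 1) - 1) x|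
        ≤ C * B ^ r * Real.exp (-B) := by
  obtain ⟨M, hM0, hM⟩ := Real.exists_pos_abs_iteratedDeriv_sigmoid_le_mul_exp r
  refine ⟨2 * M, by positivity, fun B hB j hj x ⟨hx0, hx1⟩ => ?_⟩
  have hB0 : 0 ≤ B := zero_le_one.trans hB
  rw [iteratedDeriv_deltaB_add_deltaB_add_deltaB_sub_one, abs_neg]
  calc _ ≤ M * B ^ r * exp (-B) + M * B ^ r * exp (-B) :=
        (abs_add_le _ _).trans (add_le_add
          (abs_pow_mul_iteratedDeriv_sigmoid_le (hM j hj) hB (by simp [abs_of_nonneg hB0]) hj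
            (by nlinarith))
          (abs_pow_mul_iteratedDeriv_sigmoid_le (hM j hj) hB (abs_of_nonneg hB0) hj
            (by nlinarith)))
    _ = 2 * M * B ^ r * Real.exp (-B) := by ring
end

section
/- Let 𝒵 be a standard Borel space, P_Z a probability measure on 𝒵, σ₀ > 0, and (ν_z)_{z ∈ 𝒵} a Markov kernel from 𝒵 to ℝ such that for every z ∈ 𝒵 and every μ ∈ ℝ, the Kullback–Leibler divergence KL( ν_z ‖ ν_z(· − μ) ) ≤ μ² / (2σ₀²), where ν_z(· − μ) denotes the pushforward of ν_z under t ↦ t + μ. For a bounded measurable function h : 𝒵 → ℝ, let Q_h be the n-fold product of the law on 𝒵 × ℝ of the pair (z̃, h(z̃) + η), where z̃ ~ P_Z and the conditional law of η given z̃ = z is ν_z. Then KL( Q_0 ‖ Q_h ) ≤ n · ∫ h² dP_Z / (2σ₀²). -/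
open MeasureTheory ProbabilityTheory
open scoped ENNReal ProbabilityTheory

open Classical in
/-- The Kullback–Leibler divergence `KL(μ ‖ ν) = ∫ log (dμ/dν) dμ`, valued in `EReal`,
set to `⊤` unless `μ ≪ ν` and the log-likelihood ratio is `μ`-integrable. -/
noncomputable def klDiv {α : Type*} [MeasurableSpace α] (μ ν : Measure α) : EReal :=
  if μ ≪ ν ∧ Integrable (llr μ ν) μ then ((∫ x, llr μ ν x ∂μ : ℝ) : EReal) else ⊤

/-!
Both laws are `n`-fold products of joint laws with the same first marginal: `Q_h` is
`PZ ⊗ₘ ν'` where `ν'_z` is `ν_z` translated by `h z`. For a common marginal, the density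
`d(μ ⊗ₘ κ)/d(μ ⊗ₘ η)(a, b) = (dκ_a/dη_a)(b)` and Tonelli, applied to the `ℝ≥0∞`-valued
divergence `∫ klFun (dP/dQ) dQ` (which needs no integrability), give
`KL(μ ⊗ₘ κ ‖ μ ⊗ₘ η) = ∫ KL(κ_a ‖ η_a) dμ(a)`; here the integrand is at most `h(a)²/(2σ₀²)`.
The same chain rule, for constant kernels, makes KL additive over products of probability
measures, which accounts for the factor `n`.
-/

namespace InformationTheory

variable {α β : Type*} {mα : MeasurableSpace α} {mβ : MeasurableSpace β}

lemma klDiv_map_measurableEquiv (μ ν : Measure α) [IsFiniteMeasure μ] [IsFiniteMeasure ν]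
    (e : α ≃ᵐ β) : klDiv (μ.map e) (ν.map e) = klDiv μ ν := by
  refine le_antisymm (klDiv_map_le μ ν e.measurable) ?_
  simpa only [e.map_symm_map] using klDiv_map_le (μ.map e) (ν.map e) e.symm.measurable

lemma rnDeriv_compProd_right_ae_eq [MeasurableSpace.CountableOrCountablyGenerated α β]
    {μ : Measure α} [IsFiniteMeasure μ] {κ η : Kernel α β} [IsFiniteKernel κ] [IsFiniteKernel η]
    (h_ac : ∀ᵐ a ∂μ, κ a ≪ η a) :
    (μ ⊗ₘ κ).rnDeriv (μ ⊗ₘ η) =ᵐ[μ ⊗ₘ η] fun p ↦ κ.rnDeriv η p.1 p.2 := by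
  have h_eq : μ ⊗ₘ κ = (μ ⊗ₘ η).withDensity fun p ↦ κ.rnDeriv η p.1 p.2 := by
    rw [← Measure.compProd_withDensity (Kernel.measurable_rnDeriv κ η)]
    refine Measure.compProd_congr ?_
    filter_upwards [h_ac] with a ha using (Kernel.withDensity_rnDeriv_eq ha).symm
  rw [h_eq]
  exact Measure.rnDeriv_withDensity _ (Kernel.measurable_rnDeriv κ η)

lemma klDiv_compProd_right [MeasurableSpace.CountableOrCountablyGenerated α β]
    (μ : Measure α) [IsFiniteMeasure μ] (κ η : Kernel α β) [IsFiniteKernel κ] [IsFiniteKernel η] :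
    klDiv (μ ⊗ₘ κ) (μ ⊗ₘ η) = ∫⁻ a, klDiv (κ a) (η a) ∂μ := by
  by_cases h_ac : ∀ᵐ a ∂μ, κ a ≪ η a
  · rw [klDiv_eq_lintegral_klFun_of_ac (Measure.absolutelyContinuous_compProd_right_iff.mpr h_ac)]
    calc ∫⁻ p, ENNReal.ofReal (klFun ((μ ⊗ₘ κ).rnDeriv (μ ⊗ₘ η) p).toReal) ∂(μ ⊗ₘ η)
        = ∫⁻ p, ENNReal.ofReal (klFun (κ.rnDeriv η p.1 p.2).toReal) ∂(μ ⊗ₘ η) := by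
          refine lintegral_congr_ae ?_
          filter_upwards [rnDeriv_compProd_right_ae_eq h_ac] with p hp
          rw [hp]
      _ = ∫⁻ a, ∫⁻ b, ENNReal.ofReal (klFun (κ.rnDeriv η a b).toReal) ∂(η a) ∂μ :=
          Measure.lintegral_compProd (by fun_prop)
      _ = ∫⁻ a, klDiv (κ a) (η a) ∂μ := by
          refine lintegral_congr_ae ?_
          filter_upwards [h_ac] with a ha
          rw [klDiv_eq_lintegral_klFun_of_ac ha]
          refine lintegral_congr_ae ?_
          filter_upwards [κ.rnDeriv_eq_rnDeriv_measure (η := η) (a := a)] with b hb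
          rw [hb]
  · rw [klDiv_of_not_ac (mt Measure.absolutelyContinuous_compProd_right_iff.mp h_ac), eq_comm,
      eq_top_iff]
    set s := {a | κ a ≪ η a}ᶜ
    have hs : MeasurableSet s := (Kernel.measurableSet_absolutelyContinuous κ η).compl
    have hμs : μ s ≠ 0 := h_ac
    calc ∞ = ∫⁻ _ in s, ∞ ∂μ := by simp [hμs]
      _ = ∫⁻ a in s, klDiv (κ a) (η a) ∂μ :=
          setLIntegral_congr_fun hs fun a ha ↦ (klDiv_of_not_ac ha).symm
      _ ≤ ∫⁻ a, klDiv (κ a) (η a) ∂μ := setLIntegral_le_lintegral s _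

lemma klDiv_prod (μ μ' : Measure α) (ν ν' : Measure β) [IsProbabilityMeasure μ]
    [IsFiniteMeasure μ'] [IsProbabilityMeasure ν] [IsProbabilityMeasure ν'] :
    klDiv (μ.prod ν) (μ'.prod ν') = klDiv μ μ' + klDiv ν ν' := by
  -- after swapping the factors, the two laws share the kernel `const β μ`
  have h_right : klDiv (μ.prod ν) (μ.prod ν') = klDiv ν ν' := by
    rw [← klDiv_map_measurableEquiv _ _ MeasurableEquiv.prodComm]
    change klDiv ((μ.prod ν).map Prod.swap) ((μ.prod ν').map Prod.swap) = _
    rw [Measure.prod_swap, Measure.prod_swap, ← Measure.compProd_const, ← Measure.compProd_const,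
      klDiv_compProd_left]
  rw [← Measure.compProd_const, ← Measure.compProd_const, klDiv_compProd_eq_add,
    Measure.compProd_const, Measure.compProd_const, h_right]

lemma klDiv_pi_fin : ∀ {n : ℕ} {X : Fin n → Type*} [∀ i, MeasurableSpace (X i)]
    (P Q : ∀ i, Measure (X i)) [∀ i, IsProbabilityMeasure (P i)] [∀ i, IsProbabilityMeasure (Q i)],
    klDiv (Measure.pi P) (Measure.pi Q) = ∑ i, klDiv (P i) (Q i)
  | 0, X, _, P, Q, _, _ => by simp [Measure.pi_of_empty P, Measure.pi_of_empty Q]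
  | n + 1, X, _, P, Q, _, _ => by
    rw [← klDiv_map_measurableEquiv _ _ (MeasurableEquiv.piFinSuccAbove X 0),
      (measurePreserving_piFinSuccAbove P 0).map_eq, (measurePreserving_piFinSuccAbove Q 0).map_eq,
      klDiv_prod, klDiv_pi_fin, Fin.sum_univ_succ]
    rfl

lemma klDiv_pi {ι : Type*} [Fintype ι] {X : ι → Type*} [∀ i, MeasurableSpace (X i)]
    (P Q : ∀ i, Measure (X i)) [∀ i, IsProbabilityMeasure (P i)] [∀ i, IsProbabilityMeasure (Q i)] :
    klDiv (Measure.pi P) (Measure.pi Q) = ∑ i, klDiv (P i) (Q i) := by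
  let e := (Fintype.equivFin ι).symm
  rw [← (measurePreserving_piCongrLeft P e).map_eq, ← (measurePreserving_piCongrLeft Q e).map_eq,
    klDiv_map_measurableEquiv, klDiv_pi_fin, e.sum_comp fun i ↦ klDiv (P i) (Q i)]

end InformationTheory

namespace ProbabilityTheory.Kernel

variable {α G : Type*} {mα : MeasurableSpace α} [MeasurableSpace G] [Add G] [MeasurableAdd₂ G]

noncomputable def shift (κ : Kernel α G) [IsSFiniteKernel κ] (h : α → G) (hh : Measurable h) :
    Kernel α G :=
  (deterministic h hh ×ₖ κ).map fun p ↦ p.1 + p.2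

variable (κ : Kernel α G) [IsSFiniteKernel κ] {h : α → G} (hh : Measurable h)

lemma shift_apply (a : α) : κ.shift h hh a = (κ a).map (h a + ·) := by
  rw [shift, map_apply _ measurable_add, prod_apply, deterministic_apply, Measure.dirac_prod,
    Measure.map_map measurable_add measurable_prodMk_left]
  rfl

instance : IsSFiniteKernel (κ.shift h hh) := IsSFiniteKernel.map _ _

instance [IsMarkovKernel κ] : IsMarkovKernel (κ.shift h hh) := IsMarkovKernel.map _ measurable_add

lemma _root_.MeasureTheory.Measure.compProd_shift (μ : Measure α) [SFinite μ] :
    μ ⊗ₘ κ.shift h hh = (μ ⊗ₘ κ).map fun p ↦ (p.1, h p.1 + p.2) := by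
  have hf : Measurable fun p : α × G ↦ (p.1, h p.1 + p.2) := by fun_prop
  ext s hs
  rw [Measure.map_apply hf hs, Measure.compProd_apply (hf hs), Measure.compProd_apply hs]
  refine lintegral_congr fun a ↦ ?_
  rw [shift_apply, Measure.map_apply (by fun_prop) (measurable_prodMk_left hs)]
  rfl

end ProbabilityTheory.Kernel

lemma klDiv_eq_coe_klDiv {α : Type*} [MeasurableSpace α] (μ ν : Measure α)
    [IsProbabilityMeasure μ] [IsProbabilityMeasure ν] :
    klDiv μ ν = (InformationTheory.klDiv μ ν : EReal) := by
  by_cases h : μ ≪ ν ∧ Integrable (llr μ ν) μ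
  · have h_nonneg := InformationTheory.integral_llr_add_sub_measure_univ_nonneg h.1 h.2
    simp only [probReal_univ, add_sub_cancel_right] at h_nonneg
    rw [klDiv, if_pos h, InformationTheory.klDiv_of_ac_of_integrable h.1 h.2,
      EReal.coe_ennreal_ofReal]
    simp [h_nonneg]
  · rw [klDiv, if_neg h, InformationTheory.klDiv_eq_top_iff.mpr fun hac hint ↦ h ⟨hac, hint⟩]
    rfl

theorem stmt13_general {𝒵 : Type*} [MeasurableSpace 𝒵]
    (PZ : Measure 𝒵) [IsProbabilityMeasure PZ] (σ₀ : ℝ)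
    (ν : Kernel 𝒵 ℝ) [IsMarkovKernel ν]
    (hshift : ∀ (z : 𝒵) (μ : ℝ),
      klDiv (ν z) ((ν z).map fun t => t + μ) ≤ ((μ ^ 2 / (2 * σ₀ ^ 2) : ℝ) : EReal))
    (n : ℕ) (h : 𝒵 → ℝ) (hm : Measurable h) (hb : ∃ C, ∀ z, |h z| ≤ C) :
    klDiv (Measure.pi fun _ : Fin n => PZ ⊗ₘ ν)
        (Measure.pi fun _ : Fin n => (PZ ⊗ₘ ν).map fun p : 𝒵 × ℝ => (p.1, h p.1 + p.2))
      ≤ (((n : ℝ) * (∫ z, h z ^ 2 ∂PZ) / (2 * σ₀ ^ 2) : ℝ) : EReal) := by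
  obtain ⟨C, hC⟩ := hb
  have h_sq : Integrable (fun z ↦ h z ^ 2) PZ :=
    .of_bound (by fun_prop) (C ^ 2) (ae_of_all _ fun z ↦ by
      simpa [Real.norm_eq_abs, sq_abs] using pow_le_pow_left₀ (abs_nonneg _) (hC z) 2)
  have h_cond (z : 𝒵) :
      InformationTheory.klDiv (ν z) (ν.shift h hm z) ≤ ENNReal.ofReal (h z ^ 2 / (2 * σ₀ ^ 2)) := by
    have h_map : (ν z).map (fun t ↦ t + h z) = ν.shift h hm z := by
      simp_rw [Kernel.shift_apply, add_comm]
    simpa [klDiv_eq_coe_klDiv, h_map, EReal.toENNReal_coe] using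
      EReal.toENNReal_le_toENNReal (hshift z (h z))
  have h_single : InformationTheory.klDiv (PZ ⊗ₘ ν) (PZ ⊗ₘ ν.shift h hm)
      ≤ ENNReal.ofReal ((∫ z, h z ^ 2 ∂PZ) / (2 * σ₀ ^ 2)) := by
    rw [InformationTheory.klDiv_compProd_right, ← integral_div,
      ofReal_integral_eq_lintegral_ofReal (h_sq.div_const _) (ae_of_all _ fun z ↦ by positivity)]
    exact lintegral_mono h_cond
  rw [← Measure.compProd_shift ν hm, klDiv_eq_coe_klDiv, InformationTheory.klDiv_pi,
    Finset.sum_const, Finset.card_univ, Fintype.card_fin, nsmul_eq_mul]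
  calc ((n * InformationTheory.klDiv (PZ ⊗ₘ ν) (PZ ⊗ₘ ν.shift h hm) : ℝ≥0∞) : EReal)
      ≤ ((n * ENNReal.ofReal ((∫ z, h z ^ 2 ∂PZ) / (2 * σ₀ ^ 2)) : ℝ≥0∞) : EReal) := by
        exact EReal.coe_ennreal_le_coe_ennreal_iff.mpr (by gcongr)
    _ = (((n : ℝ) * (∫ z, h z ^ 2 ∂PZ) / (2 * σ₀ ^ 2) : ℝ) : EReal) := by
        rw [← ENNReal.ofReal_natCast, ← ENNReal.ofReal_mul n.cast_nonneg, EReal.coe_ennreal_ofReal,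
          max_eq_left (by positivity), mul_div_assoc]

/-- chain rule and tensorization bound for the Kullback–Leibler divergence in
the indirect regression model `ỹ = h(z̃) + η`, where the conditional noise kernel `ν`
satisfies the shift bound `KL(ν_z ‖ ν_z(· − μ)) ≤ μ²/(2σ₀²)`.  Here `Q_0` is the `n`-fold
product of the law `PZ ⊗ₘ ν` of `(z̃, 0 + η)` and `Q_h` the `n`-fold product of the law of
`(z̃, h(z̃) + η)`, i.e. of the pushforward of `PZ ⊗ₘ ν` under `(z, t) ↦ (z, h z + t)`. -/
theorem stmt13 {𝒵 : Type*} [MeasurableSpace 𝒵] [StandardBorelSpace 𝒵]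
    (PZ : Measure 𝒵) [IsProbabilityMeasure PZ] (σ₀ : ℝ) (hσ : 0 < σ₀)
    (ν : Kernel 𝒵 ℝ) [IsMarkovKernel ν]
    (hshift : ∀ (z : 𝒵) (μ : ℝ),
      klDiv (ν z) ((ν z).map fun t => t + μ) ≤ ((μ ^ 2 / (2 * σ₀ ^ 2) : ℝ) : EReal))
    (n : ℕ) (h : 𝒵 → ℝ) (hm : Measurable h) (hb : ∃ C, ∀ z, |h z| ≤ C)
    [IsProbabilityMeasure ((PZ ⊗ₘ ν).map fun p : 𝒵 × ℝ => (p.1, h p.1 + p.2))] :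
    klDiv (Measure.pi fun _ : Fin n => PZ ⊗ₘ ν)
        (Measure.pi fun _ : Fin n => (PZ ⊗ₘ ν).map fun p : 𝒵 × ℝ => (p.1, h p.1 + p.2))
      ≤ (((n : ℝ) * (∫ z, h z ^ 2 ∂PZ) / (2 * σ₀ ^ 2) : ℝ) : EReal) :=
  stmt13_general PZ σ₀ ν hshift n h hm hb
end
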